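/- Let V ∈ ℂ^{n×n} be unitary, let Y ∈ ℂ^{n×k} with Y*Y = I_k, and let S ∈ ℂ^{(n+k)×(n+k)} be a unitary matrix satisfying S* [Y; −I_k] = [√2 I_k; 0]. Then diag(V, I_k) · S · diag(−I_k, I_n) · S* = [[V − V Y Y*, V Y],[Y*, 0_{k×k}]]. -/

import Mathlib

open Matrix

/-!
With `B = [Y; -I_k]` and `E = [√2 I_k; 0]`, the sign matrix is the reflection
`diag(-I_k, I_n) = 1 - E Eᴴ`, and `Sᴴ B = E` together with `S Sᴴ = 1` gives `S E = B`.
Hence `S diag(-I_k, I_n) Sᴴ = 1 - B Bᴴ = [[1 - Y Yᴴ, Y], [Yᴴ, 0]]`.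
On the index type `Fin n ⊕ Fin k`, the blocks `-I_k` and `√2 I_k` sit on the first `k` indices
of `Fin n`.
-/

theorem conj_one_sub_mul_conjTranspose {m n α : Type*} [Fintype m] [Fintype n] [DecidableEq m]
    [Ring α] [StarRing α] {S : Matrix m m α} {B E : Matrix m n α} (hS : S * Sᴴ = 1)
    (hE : Sᴴ * B = E) :
    S * (1 - E * Eᴴ) * Sᴴ = 1 - B * Bᴴ := by
  have hSE : S * E = B := by rw [← hE, ← Matrix.mul_assoc, hS, Matrix.one_mul]
  rw [Matrix.mul_sub, Matrix.sub_mul, Matrix.mul_one, hS, ← Matrix.mul_assoc, hSE,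
    Matrix.mul_assoc, ← conjTranspose_mul, hSE]

theorem one_sub_fromRows_neg_one_mul_conjTranspose {m n α : Type*} [Fintype n] [DecidableEq m]
    [DecidableEq n] [Ring α] [StarRing α] (Y : Matrix m n α) :
    1 - fromRows Y (-1) * (fromRows Y (-1))ᴴ = fromBlocks (1 - Y * Yᴴ) Y Yᴴ 0 := by
  rw [conjTranspose_fromRows_eq_fromCols_conjTranspose, fromRows_mul_fromCols, ← fromBlocks_one,
    sub_eq_add_neg, fromBlocks_neg, fromBlocks_add]
  simp [sub_eq_add_neg]

theorem truncated_scalar_mul_conjTranspose {α : Type*} [Semiring α] [StarRing α] {n k : ℕ}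
    (c : α) :
    (of fun (i : Fin n) (j : Fin k) => if (i : ℕ) = j then c else 0) *
        (of fun (i : Fin n) (j : Fin k) => if (i : ℕ) = j then c else 0)ᴴ =
      diagonal fun i : Fin n => if (i : ℕ) < k then c * star c else 0 := by
  ext i i'
  simp only [mul_apply, conjTranspose_apply, of_apply, diagonal_apply, apply_ite star, star_zero,
    mul_ite, ite_mul, mul_zero, zero_mul]
  by_cases hik : (i : ℕ) < k
  · rw [Finset.sum_eq_single ⟨i, hik⟩ (fun j _ hj => by grind) (by simp)]
    simp [hik, Fin.val_eq_val, eq_comm]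
  · rw [Finset.sum_eq_zero (fun j _ => by grind)]
    simp [hik]

theorem diagonal_sign_eq_one_sub_mul_conjTranspose {α : Type*} [Ring α] [StarRing α] {n k : ℕ}
    {c : α} (hc : c * star c = 2) :
    diagonal (Sum.elim (fun i : Fin n => if (i : ℕ) < k then (-1 : α) else 1)
        (fun _ : Fin k => 1)) =
      1 - (of fun (i : Fin n ⊕ Fin k) (j : Fin k) =>
          Sum.elim (fun i' : Fin n => if (i' : ℕ) = j then c else 0) (fun _ => 0) i) *
        (of fun (i : Fin n ⊕ Fin k) (j : Fin k) =>
          Sum.elim (fun i' : Fin n => if (i' : ℕ) = j then c else 0) (fun _ => 0) i)ᴴ := by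
  have hE : (of fun (i : Fin n ⊕ Fin k) (j : Fin k) =>
      Sum.elim (fun i' : Fin n => if (i' : ℕ) = j then c else 0) (fun _ => 0) i) =
      fromRows (of fun (i : Fin n) (j : Fin k) => if (i : ℕ) = j then c else 0) 0 := by
    ext (i | i) j <;> rfl
  rw [hE, conjTranspose_fromRows_eq_fromCols_conjTranspose, fromRows_mul_fromCols,
    truncated_scalar_mul_conjTranspose, hc]
  ext (i | i) (j | j)
  · simp only [diagonal_apply, one_apply, Matrix.sub_apply, fromBlocks_apply₁₁, Sum.inl.injEq,
      Sum.elim_inl]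
    split_ifs <;> norm_num
  all_goals simp [diagonal_apply, one_apply]

theorem bordered_unitary_factorization {n k : ℕ}
    (V : Matrix (Fin n) (Fin n) ℂ) (Y : Matrix (Fin n) (Fin k) ℂ)
    (S : Matrix (Fin n ⊕ Fin k) (Fin n ⊕ Fin k) ℂ)
    (hS : S ∈ Matrix.unitaryGroup (Fin n ⊕ Fin k) ℂ)
    (hSY : Sᴴ * Matrix.fromRows Y (-1 : Matrix (Fin k) (Fin k) ℂ) =
      Matrix.of fun (i : Fin n ⊕ Fin k) (j : Fin k) =>
        Sum.elim (fun i' : Fin n => if (i' : ℕ) = (j : ℕ) then (Real.sqrt 2 : ℂ) else 0)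
          (fun _ => 0) i) :
    Matrix.fromBlocks V 0 0 (1 : Matrix (Fin k) (Fin k) ℂ) * S *
        Matrix.diagonal (Sum.elim (fun i : Fin n => if (i : ℕ) < k then (-1 : ℂ) else 1)
          (fun _ : Fin k => (1 : ℂ))) * Sᴴ =
      Matrix.fromBlocks (V - V * Y * Yᴴ) (V * Y) Yᴴ (0 : Matrix (Fin k) (Fin k) ℂ) := by
  have hsqrt : (Real.sqrt 2 : ℂ) * star (Real.sqrt 2 : ℂ) = 2 := by
    rw [Complex.star_def, Complex.conj_ofReal, ← Complex.ofReal_mul,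
      Real.mul_self_sqrt zero_le_two, Complex.ofReal_ofNat]
  have hSS : S * Sᴴ = 1 := mem_unitaryGroup_iff.mp hS
  rw [diagonal_sign_eq_one_sub_mul_conjTranspose hsqrt, Matrix.mul_assoc _ S, Matrix.mul_assoc,
    conj_one_sub_mul_conjTranspose hSS hSY,
    one_sub_fromRows_neg_one_mul_conjTranspose, fromBlocks_multiply]
  simp [Matrix.mul_sub, Matrix.mul_assoc]
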